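/- For real numbers a > 0, if a function Y : [0,T) → ℝ is continuous with Y(0) < 0 and there exists a first time t₀ ∈ (0,T) with Y(t₀) = 0, Y differentiable at t₀ with Ẏ(t₀) > 0, then there is ε > 0 such that Y(t) > 0 for t ∈ (t₀, t₀ + ε). More generally (Lemma: L₁ case): if (X,Y) solves Ẋ = Y, Ẏ = -α(V(X) - v̄) - αY - βY/X² with 0 < X(t) < X∞ on [0,T), Y(0) < 0, and Y vanishes at some t₀ ∈ (0,T), then Y(t) > 0 for all t ∈ (t₀, T). -/

import Mathlib

noncomputable def V (x : ℝ) : ℝ := Real.tanh (x - 2) + Real.tanh 2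

lemma tanh_strictMono' : StrictMono Real.tanh := by
  intro a b hab
  rw [Real.tanh_eq_sinh_div_cosh, Real.tanh_eq_sinh_div_cosh,
    div_lt_div_iff₀ (Real.cosh_pos a) (Real.cosh_pos b)]
  have h := Real.sinh_pos_iff.2 (sub_pos.2 hab)
  rw [Real.sinh_sub] at h
  linarith

lemma V_strictMono : StrictMono V := fun a b hab =>
  add_lt_add_left (tanh_strictMono' (show a - 2 < b - 2 by linarith)) _

theorem negative_initial_velocity_recovery (α β v Xinf T t₀ : ℝ)
    (hα : 0 < α) (hβ : 0 < β)
    (hv0 : 0 < v) (hv1 : v < 1 + Real.tanh 2)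
    (hXinf : 0 < Xinf) (hVX : V Xinf = v) (hT : 0 < T)
    (X Y : ℝ → ℝ)
    (hX : ∀ t ∈ Set.Ico (0 : ℝ) T, X t ∈ Set.Ioo 0 Xinf)
    (hX' : ∀ t ∈ Set.Ico (0 : ℝ) T, HasDerivWithinAt X (Y t) (Set.Ico 0 T) t)
    (hY' : ∀ t ∈ Set.Ico (0 : ℝ) T,
      HasDerivWithinAt Y (-α * (V (X t) - v) - α * Y t - β * Y t / (X t) ^ 2)
        (Set.Ico 0 T) t)
    (hY0 : Y 0 < 0)
    (ht₀ : t₀ ∈ Set.Ioo (0 : ℝ) T) (hYt₀ : Y t₀ = 0) :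
    ∀ t ∈ Set.Ioo t₀ T, 0 < Y t := by
  obtain ⟨ht₀0, ht₀T⟩ := ht₀
  have hYc : ContinuousOn Y (Set.Ico 0 T) :=
    fun t ht => (hY' t ht).continuousWithinAt
  -- At any interior zero of Y, the derivative is positive, so Y is positive just
  -- to the right and negative just to the left.
  have key : ∀ s, 0 < s → s < T → Y s = 0 →
      ∃ δ > 0, (∀ t, s < t → t < s + δ → 0 < Y t) ∧
               (∀ t, s - δ < t → t < s → Y t < 0) := by
    intro s hs0 hsT hYs
    have hmem : s ∈ Set.Ico (0:ℝ) T := ⟨hs0.le, hsT⟩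
    have hnhds : Set.Ico (0:ℝ) T ∈ nhds s :=
      Filter.mem_of_superset (Ioo_mem_nhds hs0 hsT) Set.Ioo_subset_Ico_self
    have hd : HasDerivAt Y (-α * (V (X s) - v) - α * Y s - β * Y s / (X s) ^ 2) s :=
      (hY' s hmem).hasDerivAt hnhds
    have hXs := hX s hmem
    have hVlt : V (X s) < v := hVX ▸ V_strictMono hXs.2
    have hdpos : 0 < -α * (V (X s) - v) - α * Y s - β * Y s / (X s) ^ 2 := by
      rw [hYs]
      have : 0 < -α * (V (X s) - v) := by nlinarith
      simpa using this
    have hslope : Filter.Tendsto (slope Y s) (nhdsWithin s {s}ᶜ)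
        (nhds (-α * (V (X s) - v) - α * Y s - β * Y s / (X s) ^ 2)) :=
      hasDerivAt_iff_tendsto_slope.1 hd
    have hev : ∀ᶠ t in nhdsWithin s {s}ᶜ, 0 < slope Y s t :=
      hslope.eventually (eventually_gt_nhds hdpos)
    rw [eventually_nhdsWithin_iff, Metric.eventually_nhds_iff] at hev
    obtain ⟨δ, hδ, hδ'⟩ := hev
    refine ⟨δ, hδ, ?_, ?_⟩
    · intro t hst htδ
      have hne : t ≠ s := ne_of_gt hst
      have hdist : dist t s < δ := by
        rw [Real.dist_eq, abs_of_pos (by linarith)]; linarith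
      have := hδ' hdist hne
      rw [slope_def_field, hYs, sub_zero, div_pos_iff] at this
      rcases this with ⟨h1, _⟩ | ⟨_, h2⟩
      · exact h1
      · linarith
    · intro t hst hts
      have hne : t ≠ s := ne_of_lt hts
      have hdist : dist t s < δ := by
        rw [Real.dist_eq, abs_of_neg (by linarith)]; linarith
      have := hδ' hdist hne
      rw [slope_def_field, hYs, sub_zero, div_pos_iff] at this
      rcases this with ⟨h1, h2⟩ | ⟨h1, _⟩
      · linarith
      · exact h1
  -- Main argument
  intro t₁ ⟨ht₁l, ht₁r⟩
  by_contra hcon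
  push_neg at hcon
  -- Find t₂ ∈ (t₀, t₁] with Y t₂ < 0.
  have hstep : ∃ t₂, t₀ < t₂ ∧ t₂ < T ∧ Y t₂ < 0 := by
    rcases lt_or_eq_of_le hcon with hlt | heq
    · exact ⟨t₁, ht₁l, ht₁r, hlt⟩
    · obtain ⟨δ, hδ, _, hleft⟩ := key t₁ (lt_trans ht₀0 ht₁l) ht₁r heq
      set u : ℝ := (max t₀ (t₁ - δ) + t₁) / 2 with hu
      have h1 : max t₀ (t₁ - δ) < t₁ := max_lt ht₁l (by linarith)
      have hut : u < t₁ := by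
        rw [hu]; linarith
      have hul : t₀ < u := by
        have := le_max_left t₀ (t₁ - δ); rw [hu]; linarith
      have huδ : t₁ - δ < u := by
        have := le_max_right t₀ (t₁ - δ); rw [hu]; linarith
      exact ⟨u, hul, lt_trans hut ht₁r, hleft u huδ hut⟩
  obtain ⟨t₂, ht₂l, ht₂r, hYt₂⟩ := hstep
  -- s = last zero of Y before t₂
  set A : Set ℝ := {t ∈ Set.Icc t₀ t₂ | Y t = 0} with hA
  have hIccsub : Set.Icc t₀ t₂ ⊆ Set.Ico 0 T := fun x hx =>
    ⟨le_trans ht₀0.le hx.1, lt_of_le_of_lt hx.2 ht₂r⟩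
  have hAne : A.Nonempty := ⟨t₀, ⟨le_refl _, ht₂l.le⟩, hYt₀⟩
  have hAbdd : BddAbove A := ⟨t₂, fun x hx => hx.1.2⟩
  have hAclosed : IsClosed A := by
    have : A = Set.Icc t₀ t₂ ∩ Y ⁻¹' {0} := by
      ext x; simp [hA, Set.mem_setOf_eq, and_comm]
    rw [this]
    exact (hYc.mono hIccsub).preimage_isClosed_of_isClosed isClosed_Icc
      isClosed_singleton
  have hsA : sSup A ∈ A := hAclosed.csSup_mem hAne hAbdd
  set s := sSup A with hs
  obtain ⟨⟨hst₀, hst₂⟩, hYs⟩ := hsA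
  have hs0 : 0 < s := lt_of_lt_of_le ht₀0 hst₀
  have hsT : s < T := lt_of_le_of_lt hst₂ ht₂r
  have hst₂' : s < t₂ := lt_of_le_of_ne hst₂ (fun h => by rw [h] at hYs; linarith)
  obtain ⟨δ, hδ, hright, _⟩ := key s hs0 hsT hYs
  -- pick u ∈ (s, min (s+δ) t₂)
  set u : ℝ := (s + min (s + δ) t₂) / 2 with hu
  have h1 : s < min (s + δ) t₂ := lt_min (by linarith) hst₂'
  have hsu : s < u := by rw [hu]; linarith
  have huδ : u < s + δ := by
    have := min_le_left (s + δ) t₂; rw [hu]; linarith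
  have hut₂ : u < t₂ := by
    have := min_le_right (s + δ) t₂; rw [hu]; linarith
  have hYu : 0 < Y u := hright u hsu huδ
  -- IVT on [u, t₂] yields a zero past s, contradicting s = sSup A
  have hcont : ContinuousOn Y (Set.Icc u t₂) := hYc.mono (fun x hx =>
    ⟨le_trans (le_trans ht₀0.le (le_trans hst₀ (le_of_lt hsu))) hx.1,
     lt_of_le_of_lt hx.2 ht₂r⟩)
  have hmem : (0:ℝ) ∈ Set.Icc (Y t₂) (Y u) := ⟨hYt₂.le, hYu.le⟩
  obtain ⟨c, hc, hYc0⟩ := intermediate_value_Icc' hut₂.le hcont hmem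
  have hcA : c ∈ A :=
    ⟨⟨le_trans hst₀ (le_trans hsu.le hc.1), hc.2⟩, hYc0⟩
  have : c ≤ s := le_csSup hAbdd hcA
  have : s < c := lt_of_lt_of_le hsu hc.1
  linarith
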